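/- arXiv:1206.0185 — 5 statements merged into one kernel-verified Lean document; each statement's English description precedes it below -/
import Mathlib

section
/- A finite group G is nilpotent if and only if every maximal subgroup of G is F̃(G)-conjugate-permutable, i.e., for every maximal subgroup M of G and every x ∈ F̃(G), the product of M and its conjugate M^x satisfies M·M^x = M^x·M (as subsets of G). -/
open scoped Pointwise

section Defs

variable {G : Type*} [Group G]

/-- The conjugate `H^x = x⁻¹ H x` of a subgroup `H` of `G`. -/
def conjS (x : G) (H : Subgroup G) : Subgroup G :=
  H.map (MulAut.conj x⁻¹).toMonoidHom

/-- A subgroup `H` of `G` is `R`-conjugate-permutable (for a subset `R ⊆ G`) if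
`H · H^x = H^x · H` as subsets of `G`, for all `x ∈ R`. -/
def IsRCP (R : Set G) (H : Subgroup G) : Prop :=
  ∀ x ∈ R, (H : Set G) * (conjS x H : Set G) = (conjS x H : Set G) * (H : Set G)

/-- A subgroup `H` of `G` is conjugate-permutable if `H · H^x = H^x · H` for all `x ∈ G`. -/
def IsConjPermutable (H : Subgroup G) : Prop :=
  IsRCP (Set.univ : Set G) H

/-- `N` is a minimal normal subgroup of `G`. -/
def IsMinimalNormal (N : Subgroup G) : Prop :=
  N.Normal ∧ N ≠ ⊥ ∧ ∀ K : Subgroup G, K.Normal → K ≤ N → K = ⊥ ∨ K = N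

/-- `H` is an abnormal subgroup of `G`: `x ∈ ⟨H, H^x⟩` for all `x ∈ G`. -/
def IsAbnormal (H : Subgroup G) : Prop :=
  ∀ x : G, x ∈ H ⊔ conjS x H

/-- `H` is normal in the subgroup `K` of `G`. -/
def IsNormalIn (H K : Subgroup G) : Prop :=
  H ≤ K ∧ ∀ x ∈ K, ∀ h ∈ H, x * h * x⁻¹ ∈ H

/-- `H` is subnormal in the subgroup `K`: there is a chain
`H = H₀ ◁ H₁ ◁ ⋯ ◁ Hₙ = K` with each term normal in the next. -/
def IsSubnormalIn (H K : Subgroup G) : Prop :=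
  ∃ (n : ℕ) (s : Fin (n + 1) → Subgroup G),
    s 0 = H ∧ s (Fin.last n) = K ∧
    ∀ i : Fin n, s i.castSucc ≤ s i.succ ∧
      ∀ x ∈ s i.succ, ∀ h ∈ s i.castSucc, x * h * x⁻¹ ∈ s i.castSucc

/-- `H` is pronormal in the subgroup `K`: for every `x ∈ K`, the subgroups `H` and `H^x`
are conjugate in `⟨H, H^x⟩`. -/
def IsPronormalIn (H K : Subgroup G) : Prop :=
  H ≤ K ∧ ∀ x ∈ K, ∃ k ∈ H ⊔ conjS x H, conjS k H = conjS x H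

end Defs

/-- The socle of `G`: the subgroup generated by all minimal normal subgroups of `G`. -/
def socle' (G : Type*) [Group G] : Subgroup G :=
  sSup {N : Subgroup G | IsMinimalNormal N}

/-- `F̃(G)`: the subgroup of `G` containing the Frattini subgroup `Φ(G)` with
`F̃(G)/Φ(G) = Soc(G/Φ(G))`. -/
def Ftilde (G : Type*) [Group G] : Subgroup G :=
  (socle' (G ⧸ frattini G)).comap (QuotientGroup.mk' (frattini G))

/-- The Fitting subgroup `F(G)`: the largest normal nilpotent subgroup of `G`
(the subgroup generated by all normal nilpotent subgroups). -/
def Fitting (G : Type*) [Group G] : Subgroup G :=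
  sSup {N : Subgroup G | N.Normal ∧ Group.IsNilpotent N}

section FittingNormal

variable {G : Type*} [Group G]

lemma map_conj_eq_self {N : Subgroup G} (hN : N.Normal) (g : G) :
    N.map (MulAut.conj g).toMonoidHom = N := by
  ext x
  simp only [Subgroup.mem_map, MulEquiv.coe_toMonoidHom, MulAut.conj_apply]
  constructor
  · rintro ⟨n, hn, rfl⟩; exact hN.conj_mem n hn g
  · intro hx
    refine ⟨g⁻¹ * x * g, by simpa using hN.conj_mem x hx g⁻¹, by group⟩

instance Fitting_normal (G : Type*) [Group G] : (Fitting G).Normal := by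
  constructor
  intro n hn g
  have h1 : (Fitting G).map (MulAut.conj g).toMonoidHom = Fitting G := by
    unfold Fitting
    rw [sSup_eq_iSup, Subgroup.map_iSup]
    refine iSup_congr fun N => ?_
    rw [Subgroup.map_iSup]
    exact iSup_congr_Prop Iff.rfl fun hN => map_conj_eq_self hN.1 g
  rw [← h1]
  exact Subgroup.mem_map.2 ⟨n, hn, rfl⟩

end FittingNormal

/-- The generalized Fitting subgroup `F*(G)`: the subgroup containing `F(G)` with
`F*(G)/F(G) = Soc(C_G(F(G))·F(G)/F(G))`. -/
def FStar (G : Type*) [Group G] : Subgroup G :=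
  Subgroup.comap (QuotientGroup.mk' (Fitting G))
    (Subgroup.map
      ((Subgroup.centralizer (Fitting G : Set G) ⊔ Fitting G).map
          (QuotientGroup.mk' (Fitting G))).subtype
      (socle' ((Subgroup.centralizer (Fitting G : Set G) ⊔ Fitting G).map
          (QuotientGroup.mk' (Fitting G)))))

/-- A group is supersoluble if it has a normal series all of whose terms are
normal in the whole group and all of whose factors are cyclic; the factor
`s (i+1) / s i` being cyclic is expressed by `s (i+1) ≤ s i ⊔ ⟨g⟩` for some `g`. -/
def IsSupersoluble (G : Type*) [Group G] : Prop :=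
  ∃ (n : ℕ) (s : Fin (n + 1) → Subgroup G),
    Monotone s ∧ s 0 = ⊥ ∧ s (Fin.last n) = ⊤ ∧ (∀ i, (s i).Normal) ∧
    ∀ i : Fin n, ∃ g : G, s i.succ ≤ s i.castSucc ⊔ Subgroup.zpowers g

/-- A group is metanilpotent if it has a normal nilpotent subgroup with
nilpotent quotient. -/
def IsMetanilpotent (G : Type*) [Group G] : Prop :=
  ∃ (N : Subgroup G) (hN : N.Normal),
    Group.IsNilpotent N ∧
      @Group.IsNilpotent (G ⧸ N) (@QuotientGroup.Quotient.group G _ N hN)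

/-!
If a non-normal maximal subgroup `M` permutes with `M^x`, then `x ∈ M`; so the hypothesis puts
`F̃(G)` inside every non-normal maximal subgroup.
If `G' ≰ Φ(G)`, a minimal normal subgroup of `G/Φ(G)` inside the image of `G'` lifts to some
`N ≤ F̃(G)` with `N ≰ Φ(G)`. A maximal subgroup `U ⊉ N` cannot be normal, since then `G/U` is
cyclic and `U ⊇ G'Φ(G) ⊇ N`, nor non-normal, since then `U ⊇ F̃(G) ⊇ N`. Hence `G' ≤ Φ(G)`,
so every maximal subgroup contains `G'`, is normal, and `G` is nilpotent.
-/

open Subgroup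

section
variable {G : Type*} [Group G]

theorem mem_conjS_iff {x g : G} {H : Subgroup G} : g ∈ conjS x H ↔ x * g * x⁻¹ ∈ H := by
  rw [conjS, mem_map_equiv, MulAut.conj_symm_apply, inv_inv]

theorem conjS_eq_self_iff {x : G} {H : Subgroup G} :
    conjS x H = H ↔ x ∈ normalizer (H : Set G) := by
  rw [← inv_mem_iff, mem_normalizer_iff_map_conj_eq]
  rfl

theorem coe_sup_eq_mul_of_mul_comm {H K : Subgroup G}
    (hHK : (H : Set G) * K = K * H) : ((H ⊔ K : Subgroup G) : Set G) = H * K := by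
  let HK : Subgroup G :=
    { carrier := H * K
      one_mem' := ⟨1, H.one_mem, 1, K.one_mem, one_mul 1⟩
      mul_mem' := fun ha hb => by
        have : (H : Set G) * K * (H * K) = H * K := by
          rw [mul_assoc, ← mul_assoc (K : Set G), ← hHK, mul_assoc, coe_mul_coe, ← mul_assoc,
            coe_mul_coe]
        exact this ▸ Set.mul_mem_mul ha hb
      inv_mem' := fun ha => by
        have : ((H : Set G) * K)⁻¹ = H * K := by rw [mul_inv_rev, inv_coe_set, inv_coe_set, hHK]
        exact this ▸ Set.inv_mem_inv.2 ha }
  refine le_antisymm (sup_le (fun h hh => ?_) fun k hk => ?_ : H ⊔ K ≤ HK) ?_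
  · exact ⟨h, hh, 1, K.one_mem, mul_one h⟩
  · exact ⟨1, H.one_mem, k, hk, one_mul k⟩
  · rintro _ ⟨h, hh, k, hk, rfl⟩
    exact mul_mem (mem_sup_left hh) (mem_sup_right hk)

theorem IsCoatom.normalizer_eq_self {M : Subgroup G} (hM : IsCoatom M) (hnn : ¬M.Normal) :
    normalizer (M : Set G) = M :=
  (hM.le_iff.1 le_normalizer).resolve_left (mt normalizer_eq_top_iff.1 hnn)

/-- The subgroup `M·M^x` is either `M`, and then `x` normalizes `M`, or `G`, and then
writing `x = m · x⁻¹m'x` gives `x = m'm ∈ M`. -/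
theorem IsCoatom.mem_of_mul_conjS_comm [Finite G] {M : Subgroup G} {x : G} (hM : IsCoatom M)
    (hnn : ¬M.Normal) (hx : (M : Set G) * conjS x M = conjS x M * M) : x ∈ M := by
  rcases hM.le_iff.1 (le_sup_left : M ≤ M ⊔ conjS x M) with htop | hself
  · obtain ⟨m, hm, c, hc, hmc⟩ : x ∈ (M : Set G) * conjS x M := by
      rw [← coe_sup_eq_mul_of_mul_comm hx, htop]; trivial
    have hxm : x * m⁻¹ ∈ M := by
      simpa [eq_inv_mul_of_mul_eq hmc, mul_assoc] using mem_conjS_iff.1 hc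
    simpa using mul_mem hxm hm
  · have hle : conjS x M ≤ M := sup_eq_left.1 hself
    have hcard : Nat.card (conjS x M) = Nat.card M :=
      card_map_of_injective (MulAut.conj x⁻¹).injective
    have hconj : conjS x M = M := eq_of_le_of_card_ge hle hcard.ge
    rw [← hM.normalizer_eq_self hnn]
    exact conjS_eq_self_iff.1 hconj

theorem IsCoatom.commutator_le_of_normal {U : Subgroup G} (hU : IsCoatom U) [U.Normal] :
    commutator G ≤ U := by
  obtain ⟨g, hg⟩ : ∃ g, g ∉ U := by
    by_contra! h
    exact hU.1 (eq_top_iff.2 fun g _ => h g)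
  refine Normal.commutator_le_of_self_sup_commutative_eq_top (H := zpowers g) ?_ inferInstance
  exact hU.2 _ (lt_of_le_of_ne le_sup_left fun h => hg (h ▸ mem_sup_right (mem_zpowers g)))

theorem exists_isMinimalNormal_le [Finite G] {K : Subgroup G} (hK : K.Normal) (hne : K ≠ ⊥) :
    ∃ N ≤ K, IsMinimalNormal N := by
  obtain ⟨N, hNK, ⟨hN, hNne⟩, hmin⟩ :=
    exists_minimal_le_of_wellFoundedLT (fun N : Subgroup G => N.Normal ∧ N ≠ ⊥) K ⟨hK, hne⟩
  refine ⟨N, hNK, hN, hNne, fun L hL hLN => or_iff_not_imp_left.2 fun hLne => ?_⟩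
  exact le_antisymm hLN (hmin ⟨hL, hLne⟩ hLN)

theorem exists_isCoatom_not_le_of_not_le_frattini {N : Subgroup G} (h : ¬N ≤ frattini G) :
    ∃ M, IsCoatom M ∧ ¬N ≤ M := by
  by_contra! hN
  exact h (le_iInf₂ hN)

theorem commutator_le_frattini_of_forall_ftilde_le [Finite G]
    (h : ∀ M : Subgroup G, IsCoatom M → ¬M.Normal → Ftilde G ≤ M) :
    commutator G ≤ frattini G := by
  set π := QuotientGroup.mk' (frattini G)
  have hπ : Function.Surjective π := QuotientGroup.mk'_surjective _
  by_contra hG'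
  have hne : (commutator G).map π ≠ ⊥ := by
    rwa [Ne, Subgroup.map_eq_bot_iff, QuotientGroup.ker_mk']
  obtain ⟨N, hNG', hN⟩ := exists_isMinimalNormal_le (Normal.map inferInstance π hπ) hne
  have hNΦ : ¬N.comap π ≤ frattini G := fun hle => hN.2.1 <| by
    rwa [← map_comap_eq_self_of_surjective hπ N, Subgroup.map_eq_bot_iff, QuotientGroup.ker_mk']
  obtain ⟨U, hU, hNU⟩ := exists_isCoatom_not_le_of_not_le_frattini hNΦ
  apply hNU
  by_cases hUn : U.Normal
  · calc N.comap π ≤ ((commutator G).map π).comap π := comap_mono hNG'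
      _ = commutator G ⊔ frattini G := by rw [comap_map_eq, QuotientGroup.ker_mk']
      _ ≤ U := sup_le hU.commutator_le_of_normal (frattini_le_coatom hU)
  · exact (comap_mono (le_sSup hN)).trans (h U hU hUn)

theorem isNilpotent_of_commutator_le_frattini [Finite G] (h : commutator G ≤ frattini G) :
    Group.IsNilpotent G :=
  (Group.isNilpotent_of_finite_tfae.out 0 2).2 fun _ hM =>
    Normal.of_commutator_le _ (h.trans (frattini_le_coatom hM))

end

theorem nilpotent_iff_maximal_ftilde_conjugate_permutable
    (G : Type*) [Group G] [Finite G] :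
    Group.IsNilpotent G ↔
      ∀ M : Subgroup G, IsCoatom M → IsRCP (Ftilde G : Set G) M := by
  constructor
  · intro hG M hM x _
    have hMn : M.Normal := Group.normalizerCondition_of_isNilpotent.normal_of_coatom M hM
    rw [conjS_eq_self_iff.2 (by rw [normalizer_eq_top_iff.2 hMn]; exact mem_top x)]
  · intro h
    refine isNilpotent_of_commutator_le_frattini (commutator_le_frattini_of_forall_ftilde_le ?_)
    exact fun M hM hnn x hx => hM.mem_of_mul_conjS_comm hnn (h M hM x hx)
end

section
/- If every maximal subgroup of a finite group G is conjugate-permutable (i.e., M·M^x = M^x·M as subsets of G for every maximal subgroup M and every x ∈ G), then G is nilpotent. -/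
open scoped Pointwise

section AuxCP

variable {G : Type*} [Group G]

lemma conjS_mul (a b : G) (M : Subgroup G) : conjS (a * b) M = conjS b (conjS a M) := by
  unfold conjS
  rw [Subgroup.map_map]
  congr 1
  ext m
  simp [mul_assoc]

lemma conjS_of_mem {a : G} {M : Subgroup G} (ha : a ∈ M) : conjS a M = M := by
  ext m
  simp only [conjS, Subgroup.mem_map, MulEquiv.coe_toMonoidHom, MulAut.conj_apply, inv_inv]
  constructor
  · rintro ⟨n, hn, rfl⟩
    exact mul_mem (mul_mem (inv_mem ha) hn) ha
  · intro hm
    exact ⟨a * m * a⁻¹, mul_mem (mul_mem ha hm) (inv_mem ha), by group⟩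

lemma card_conjS (x : G) (M : Subgroup G) : Nat.card (conjS x M) = Nat.card M :=
  (Nat.card_congr (Subgroup.equivMapOfInjective M _ (MulAut.conj x⁻¹).injective).toEquiv).symm

lemma normal_of_coatom_conjPermutable [Finite G] (M : Subgroup G) (hM : IsCoatom M)
    (hcp : IsConjPermutable M) : M.Normal := by
  have key : ∀ x : G, conjS x M = M := by
    intro x
    by_cases hle : conjS x M ≤ M
    · exact Subgroup.eq_of_le_of_card_ge hle (card_conjS x M).ge
    · have hcomm := hcp x (Set.mem_univ x)
      set K := conjS x M with hK
      -- the set M * K is a subgroup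
      let S : Subgroup G :=
        { carrier := (M : Set G) * (K : Set G)
          one_mem' := ⟨1, one_mem _, 1, one_mem _, mul_one 1⟩
          mul_mem' := by
            rintro a b ⟨h1, hh1, k1, hk1, rfl⟩ ⟨h2, hh2, k2, hk2, rfl⟩
            have : k1 * h2 ∈ (M : Set G) * (K : Set G) := by
              rw [hcomm]
              exact ⟨k1, hk1, h2, hh2, rfl⟩
            obtain ⟨h', hh', k', hk', heq⟩ := this
            refine ⟨h1 * h', mul_mem hh1 hh', k' * k2, mul_mem hk' hk2, ?_⟩
            show h1 * h' * (k' * k2) = h1 * k1 * (h2 * k2)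
            have heq' : h' * k' = k1 * h2 := heq
            have : h1 * h' * (k' * k2) = h1 * (h' * k') * k2 := by group
            rw [this, heq']; group
          inv_mem' := by
            rintro a ⟨h, hh, k, hk, rfl⟩
            have : k⁻¹ * h⁻¹ ∈ (K : Set G) * (M : Set G) :=
              ⟨k⁻¹, inv_mem hk, h⁻¹, inv_mem hh, rfl⟩
            rw [← hcomm] at this
            simpa [mul_inv_rev] using this }
      have hMS : M ≤ S := fun m hm => ⟨m, hm, 1, one_mem _, mul_one m⟩
      have hKS : K ≤ S := fun k hk => ⟨1, one_mem _, k, hk, one_mul k⟩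
      have hsup : M ⊔ K = ⊤ := by
        refine hM.2 _ (lt_of_le_of_ne le_sup_left ?_)
        intro h
        exact hle (h ▸ le_sup_right)
      have hxS : x ∈ S := by
        have : (⊤ : Subgroup G) ≤ S := hsup ▸ sup_le hMS hKS
        exact this trivial
      obtain ⟨a, ha, b, hb, hab⟩ := hxS
      have hxb : conjS x M = conjS b M := by
        rw [← hab, conjS_mul, conjS_of_mem ha]
      have hbM : b ∈ M := by
        have : b ∈ conjS b M := hxb ▸ hb
        obtain ⟨n, hn, hnb⟩ := this
        have : n = b := by
          have := hnb
          simp only [MulEquiv.coe_toMonoidHom, MulAut.conj_apply, inv_inv] at this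
          -- this : b⁻¹ * n * b = b
          calc n = b * (b⁻¹ * n * b) * b⁻¹ := by group
            _ = b * b * b⁻¹ := by rw [this]
            _ = b := by group
        rwa [this] at hn
      show conjS x M = M
      rw [hxb, conjS_of_mem hbM]
  constructor
  intro n hn g
  have := key g⁻¹
  have hmem : g * n * g⁻¹ ∈ conjS g⁻¹ M :=
    ⟨n, hn, by simp [MulAut.conj_apply]⟩
  rwa [this] at hmem


end AuxCP

theorem nilpotent_of_maximal_conjugate_permutable
    (G : Type*) [Group G] [Finite G]
    (h : ∀ M : Subgroup G, IsCoatom M → IsConjPermutable M) :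
    Group.IsNilpotent G := by
  have := (isNilpotent_of_finite_tfae (G := G)).out 2 0
  exact this.mp (fun M hM => normal_of_coatom_conjPermutable M hM (h M hM))
end

section
/- A finite group G is nilpotent if and only if the normalizer N_G(P) of every Sylow subgroup P of G contains F*(G). -/
open scoped Pointwise

/-! Let `S` be the intersection of the normalizers of all Sylow subgroups of `G`. It is normal
and each of its Sylow subgroups is normal in it, so `S ≤ F(G)`; hence `F*(G) ≤ S` forces
`F*(G) = F(G)`, which means `C_G(F(G)) ≤ F(G)`. On the other hand `S` is hypercentral: a Sylow
`q`-subgroup `Q` of `S` is normal in `G`, and a Sylow `r`-subgroup with `r ≠ q` normalizes `Q`, is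
normalized by it and meets it trivially, hence centralizes it. So `G = P C_G(Q)` for a Sylow
`q`-subgroup `P ≥ Q`, and the nilpotency of `P` pushes `Q` into some `Z_k(G)`. Finally, once
`F(G) ≤ Z_K(G)` and `C_G(F(G)) ≤ F(G)`, the three subgroups lemma gives
`γ_K(G) ≤ C_G(Z_K(G)) ≤ Z_K(G)`, whence `γ_{2K}(G) = 1`. -/

open scoped commutatorElement

namespace Subgroup

variable {G : Type*} [Group G]

theorem commutator_commutator_le_of_rotate {H₁ H₂ H₃ M : Subgroup G} [M.Normal]
    (h1 : ⁅⁅H₂, H₃⁆, H₁⁆ ≤ M) (h2 : ⁅⁅H₃, H₁⁆, H₂⁆ ≤ M) : ⁅⁅H₁, H₂⁆, H₃⁆ ≤ M := by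
  simp only [← QuotientGroup.ker_mk' M, ← map_eq_bot_iff, map_commutator] at h1 h2 ⊢
  exact commutator_commutator_eq_bot_of_rotate h1 h2

variable (G) in
theorem commutator_upperCentralSeries_top_le_pred (i : ℕ) :
    ⁅upperCentralSeries G i, ⊤⁆ ≤ upperCentralSeries G (i - 1) := by
  cases i with
  | zero => simp
  | succ i => exact commutator_upperCentralSeries_top_le G i

variable (G) in
theorem commutator_lowerCentralSeries_upperCentralSeries_le (j i : ℕ) :
    ⁅(⊤ : Subgroup G).lowerCentralSeries j, upperCentralSeries G i⁆ ≤
      upperCentralSeries G (i - (j + 1)) := by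
  induction j generalizing i with
  | zero =>
    rw [lowerCentralSeries_zero, commutator_comm]
    exact commutator_upperCentralSeries_top_le_pred G i
  | succ j ih =>
    rw [lowerCentralSeries_succ]
    apply commutator_commutator_le_of_rotate
    · calc ⁅⁅⊤, upperCentralSeries G i⁆, (⊤ : Subgroup G).lowerCentralSeries j⁆
          ≤ ⁅upperCentralSeries G (i - 1), (⊤ : Subgroup G).lowerCentralSeries j⁆ := by
            rw [commutator_comm ⊤]
            exact commutator_mono (commutator_upperCentralSeries_top_le_pred G i) le_rfl
        _ ≤ upperCentralSeries G (i - 1 - (j + 1)) := by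
            rw [commutator_comm]; exact ih (i - 1)
        _ = upperCentralSeries G (i - (j + 1 + 1)) := by congr 1; omega
    · calc ⁅⁅upperCentralSeries G i, (⊤ : Subgroup G).lowerCentralSeries j⁆, ⊤⁆
          ≤ ⁅upperCentralSeries G (i - (j + 1)), ⊤⁆ := by
            rw [commutator_comm (upperCentralSeries G i)]
            exact commutator_mono (ih i) le_rfl
        _ ≤ upperCentralSeries G (i - (j + 1) - 1) := commutator_upperCentralSeries_top_le_pred G _
        _ = upperCentralSeries G (i - (j + 1 + 1)) := by rw [Nat.sub_sub]

theorem lowerCentralSeries_add_le_upperCentralSeries_sub {j i : ℕ}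
    (h : (⊤ : Subgroup G).lowerCentralSeries j ≤ upperCentralSeries G i) (n : ℕ) :
    (⊤ : Subgroup G).lowerCentralSeries (j + n) ≤ upperCentralSeries G (i - n) := by
  induction n with
  | zero => exact h
  | succ n ih =>
    rw [← add_assoc, lowerCentralSeries_succ, ← Nat.sub_sub]
    exact (commutator_mono ih le_rfl).trans (commutator_upperCentralSeries_top_le_pred G _)

theorem isNilpotent_of_centralizer_le_of_le_upperCentralSeries {D : Subgroup G} {K : ℕ}
    (hC : centralizer (D : Set G) ≤ D) (hD : D ≤ upperCentralSeries G K) : Group.IsNilpotent G := by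
  have hlcs : (⊤ : Subgroup G).lowerCentralSeries K ≤ upperCentralSeries G K := by
    have h := commutator_lowerCentralSeries_upperCentralSeries_le G K K
    rw [Nat.sub_eq_zero_of_le (Nat.le_succ K), upperCentralSeries_zero, le_bot_iff,
      commutator_eq_bot_iff_le_centralizer] at h
    exact (h.trans ((centralizer_le hD).trans hC)).trans hD
  refine nilpotent_iff_lowerCentralSeries.mpr ⟨K + K, le_bot_iff.mp ?_⟩
  simpa using lowerCentralSeries_add_le_upperCentralSeries_sub hlcs K


theorem le_centralizer_of_le_normalizer_of_disjoint {Q W : Subgroup G} [Q.Normal]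
    (hQW : Q ≤ normalizer (W : Set G)) (hdisj : Disjoint Q W) : W ≤ centralizer (Q : Set G) := by
  rw [← commutator_eq_bot_iff_le_centralizer, eq_bot_iff, ← hdisj.eq_bot]
  exact le_inf (commutator_le_right W Q) (le_normalizer_iff_commutator_le_left.mp hQW)

theorem exists_le_upperCentralSeries_of_sup_centralizer_eq_top {Q P : Subgroup G} [Q.Normal]
    [Group.IsNilpotent P] (hQP : Q ≤ P) (hPC : P ⊔ centralizer (Q : Set G) = ⊤) :
    ∃ k, Q ≤ upperCentralSeries G k := by
  have key : ∀ k, ∀ x : P, x ∈ upperCentralSeries P k → (x : G) ∈ Q →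
      (x : G) ∈ upperCentralSeries G k := by
    intro k
    induction k with
    | zero =>
      intro x hx _
      rw [upperCentralSeries_zero, mem_bot] at hx ⊢
      rw [hx, OneMemClass.coe_one]
    | succ k ih =>
      intro x hx hxQ
      rw [mem_upperCentralSeries_succ_iff] at hx ⊢
      intro g
      have hg : g ∈ (P : Set G) * centralizer (Q : Set G) := by
        rw [← mul_normal, hPC]; trivial
      obtain ⟨a, ha, c, hc, rfl⟩ := hg
      have hcx : c * (x : G)⁻¹ * c⁻¹ = (x : G)⁻¹ := by
        rw [← mem_centralizer_iff.mp hc _ (inv_mem hxQ), mul_inv_cancel_right]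
      have hcomm : ⁅(x : G), a * c⁆ = ⁅(x : G), a⁆ := by
        simp only [commutatorElement_def, mul_inv_rev]
        calc (x : G) * (a * c) * (x : G)⁻¹ * (c⁻¹ * a⁻¹)
            = x * a * (c * (x : G)⁻¹ * c⁻¹) * a⁻¹ := by group
          _ = x * a * (x : G)⁻¹ * a⁻¹ := by rw [hcx]
      rw [hcomm]
      refine ih _ (hx ⟨a, ha⟩) ?_
      show (x : G) * a * (x : G)⁻¹ * a⁻¹ ∈ Q
      rw [mul_assoc, mul_assoc, ← mul_assoc a]
      exact Q.mul_mem hxQ (‹Q.Normal›.conj_mem _ (inv_mem hxQ) a)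
  obtain ⟨n, hn⟩ := Group.IsNilpotent.nilpotent P
  exact ⟨n, fun x hx => key n ⟨x, hQP hx⟩ (hn ▸ mem_top _) hx⟩

variable (G) in
def sylowNormalizersInf : Subgroup G :=
  ⨅ (p : ℕ) (_ : p.Prime) (P : Sylow p G), normalizer (P : Set G)

theorem le_sylowNormalizersInf_iff {H : Subgroup G} :
    H ≤ sylowNormalizersInf G ↔ ∀ p, p.Prime → ∀ P : Sylow p G, H ≤ normalizer (P : Set G) := by
  simp only [sylowNormalizersInf, le_iInf_iff]

instance sylowNormalizersInf_normal : (sylowNormalizersInf G).Normal where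
  conj_mem x hx g := by
    simp only [sylowNormalizersInf, mem_iInf, ← Sylow.smul_eq_iff_mem_normalizer] at hx ⊢
    intro p hp P
    rw [mul_smul, mul_smul, hx p hp, smul_inv_smul]

theorem inf_sylow_le_sylow {p : ℕ} [Fact p.Prime] {D : Subgroup G}
    (hD : D ≤ sylowNormalizersInf G) (R R' : Sylow p G) : D ⊓ R ≤ R' := by
  have hR' := le_sylowNormalizersInf_iff.mp hD p Fact.out R'
  have h := (R.isPGroup'.to_le (inf_le_right (a := D))).inf_normalizer_sylow R'
  exact fun x hx => (h.le ⟨hx, hR' hx.1⟩).2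

theorem inf_sylow_normal {p : ℕ} [Fact p.Prime] {D : Subgroup G} [hDn : D.Normal]
    (hD : D ≤ sylowNormalizersInf G) (R : Sylow p G) : (D ⊓ R).Normal where
  conj_mem x hx g := by
    refine ⟨hDn.conj_mem x hx.1 g, ?_⟩
    have hx' := inf_sylow_le_sylow hD R (g⁻¹ • R) hx
    rw [Sylow.coe_subgroup_smul, mem_pointwise_smul_iff_inv_smul_mem] at hx'
    simp only [MulAut.smul_def, map_inv, inv_inv] at hx'
    exact hx'

variable [Finite G]

theorem eq_top_of_forall_exists_sylow_le {H : Subgroup G}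
    (h : ∀ p, p.Prime → ∃ P : Sylow p G, (P : Subgroup G) ≤ H) : H = ⊤ := by
  refine index_eq_one.mp (Nat.eq_one_iff_not_exists_prime_dvd.mpr fun p hp hdvd => ?_)
  have := Fact.mk hp
  obtain ⟨P, hP⟩ := h p hp
  exact P.not_dvd_index (hdvd.trans (index_dvd_of_le hP))

theorem isNilpotent_of_le_sylowNormalizersInf {D : Subgroup G} (hD : D ≤ sylowNormalizersInf G) :
    Group.IsNilpotent D := by
  refine ((Group.isNilpotent_of_finite_tfae (G := D)).out 0 3).mpr fun p hp T => ?_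
  obtain ⟨R, hR⟩ := Sylow.exists_comap_subtype_eq T
  rw [← hR]
  exact normal_subgroupOf_of_le_normalizer (le_sylowNormalizersInf_iff.mp hD p hp.out R)

theorem sylowNormalizersInf_le_Fitting : sylowNormalizersInf G ≤ Fitting G :=
  le_sSup ⟨inferInstance, isNilpotent_of_le_sylowNormalizersInf le_rfl⟩

theorem exists_le_upperCentralSeries_of_isPGroup {q : ℕ} [Fact q.Prime] {Q : Subgroup G}
    [Q.Normal] (hQ : IsPGroup q Q) (hQS : Q ≤ sylowNormalizersInf G) :
    ∃ k, Q ≤ upperCentralSeries G k := by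
  obtain ⟨P⟩ : Nonempty (Sylow q G) := inferInstance
  have : Group.IsNilpotent P := P.isPGroup'.isNilpotent
  refine exists_le_upperCentralSeries_of_sup_centralizer_eq_top (hQ.le_sylow_of_normal P)
    (eq_top_of_forall_exists_sylow_le fun r hr => ?_)
  by_cases hrq : r = q
  · subst hrq
    exact ⟨P, le_sup_left⟩
  · have := Fact.mk hr
    obtain ⟨W⟩ : Nonempty (Sylow r G) := inferInstance
    refine ⟨W, le_sup_of_le_right (le_centralizer_of_le_normalizer_of_disjoint
      (le_sylowNormalizersInf_iff.mp hQS r hr W) ?_)⟩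
    exact IsPGroup.disjoint_of_ne q r (Ne.symm hrq) _ _ hQ W.isPGroup'

variable (G) in
theorem exists_forall_upperCentralSeries_le :
    ∃ K, ∀ k, upperCentralSeries G k ≤ upperCentralSeries G K := by
  obtain ⟨K, hK⟩ := WellFoundedGT.monotone_chain_condition
    ⟨upperCentralSeries G, upperCentralSeries_mono G⟩
  refine ⟨K, fun k => ?_⟩
  rcases le_total k K with hkK | hKk
  · exact upperCentralSeries_mono G hkK
  · exact (hK k hKk).ge

variable (G) in
theorem exists_sylowNormalizersInf_le_upperCentralSeries :
    ∃ K, sylowNormalizersInf G ≤ upperCentralSeries G K := by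
  obtain ⟨K, hK⟩ := exists_forall_upperCentralSeries_le G
  refine ⟨K, subgroupOf_eq_top.mp (eq_top_of_forall_exists_sylow_le fun p hp => ?_)⟩
  have := Fact.mk hp
  obtain ⟨T⟩ : Nonempty (Sylow p (sylowNormalizersInf G)) := inferInstance
  obtain ⟨R, hR⟩ := Sylow.exists_comap_subtype_eq T
  have := inf_sylow_normal le_rfl R
  obtain ⟨k, hk⟩ := exists_le_upperCentralSeries_of_isPGroup
    (R.isPGroup'.to_le (inf_le_right (a := sylowNormalizersInf G))) inf_le_left
  refine ⟨T, ?_⟩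
  rw [← hR]
  exact fun x hx => hK k (hk ⟨x.2, hx⟩)

end Subgroup

theorem socle'_ne_bot (K : Type*) [Group K] [Finite K] [Nontrivial K] : socle' K ≠ ⊥ := by
  obtain ⟨N, ⟨hN, hN_ne⟩, hmin⟩ := (wellFounded_lt (α := Subgroup K)).has_min
    {N | N.Normal ∧ N ≠ ⊥} ⟨⊤, inferInstance, top_ne_bot⟩
  have hNmin : IsMinimalNormal N := ⟨hN, hN_ne, fun L hL hLN =>
    (eq_or_ne L ⊥).imp_right fun hL_ne => hLN.eq_of_not_lt (hmin L ⟨hL, hL_ne⟩)⟩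
  exact fun h => hN_ne (le_bot_iff.mp (h ▸ le_sSup hNmin))

theorem Fitting_le_FStar (G : Type*) [Group G] : Fitting G ≤ FStar G := by
  intro x hx
  have hx1 : QuotientGroup.mk' (Fitting G) x = 1 := (QuotientGroup.eq_one_iff x).mpr hx
  rw [FStar, Subgroup.mem_comap, hx1]
  exact one_mem _

theorem centralizer_Fitting_le_of_FStar_le {G : Type*} [Group G] [Finite G]
    (h : FStar G ≤ Fitting G) : Subgroup.centralizer (Fitting G : Set G) ≤ Fitting G := by
  set H := (Subgroup.centralizer (Fitting G : Set G) ⊔ Fitting G).map (QuotientGroup.mk' (Fitting G))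
  have hsoc : (socle' H).map H.subtype = ⊥ := by
    rw [← Subgroup.map_comap_eq_self_of_surjective (QuotientGroup.mk'_surjective (Fitting G))
      ((socle' H).map H.subtype), Subgroup.map_eq_bot_iff, QuotientGroup.ker_mk']
    exact h
  rw [Subgroup.map_eq_bot_iff_of_injective _ H.subtype_injective] at hsoc
  have hH : H = ⊥ := by
    by_contra hne
    have := (Subgroup.nontrivial_iff_ne_bot H).mpr hne
    exact socle'_ne_bot H hsoc
  rw [Subgroup.map_eq_bot_iff, QuotientGroup.ker_mk'] at hH
  exact le_sup_left.trans hH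

theorem nilpotent_iff_fstar_le_sylow_normalizers
    (G : Type*) [Group G] [Finite G] :
    Group.IsNilpotent G ↔
      ∀ (p : ℕ), p.Prime → ∀ P : Sylow p G,
        FStar G ≤ Subgroup.normalizer ((P : Subgroup G) : Set G) := by
  refine ⟨fun hG p hp P => ?_, fun h => ?_⟩
  · have := Fact.mk hp
    rw [Subgroup.normalizer_eq_top_iff.mpr inferInstance]
    exact le_top
  · have hS := Subgroup.le_sylowNormalizersInf_iff.mpr h
    obtain ⟨K, hK⟩ := Subgroup.exists_sylowNormalizersInf_le_upperCentralSeries G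
    exact Subgroup.isNilpotent_of_centralizer_le_of_le_upperCentralSeries
      (centralizer_Fitting_le_of_FStar_le (hS.trans Subgroup.sylowNormalizersInf_le_Fitting))
      ((Fitting_le_FStar G).trans (hS.trans hK))
end

section
/- For every finite group G, the generalized Fitting subgroup F*(G) is contained in F̃(G). -/
open scoped Pointwise

/-!
Write `Ḡ = G ⧸ Φ(G)`: its Frattini subgroup is trivial, hence so is that of every normal subgroup
of `Ḡ`. In a Frattini-free group a nilpotent normal subgroup is abelian and, by Gaschütz's
complement argument, a product of minimal normal subgroups. The socle of a normal subgroup `Y`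
lies in the socle of the whole group: the normal closure of an abelian minimal normal subgroup of
`Y` is abelian, while the normal closure `D` of a perfect one `W` is perfect, hence centreless, so
a minimal normal subgroup inside `D`, which either contains `W` or centralises `D`, contains `W`.

Hence `F(G) / Φ(G) ≤ Soc(Ḡ)`. The image `Ȳ` of `C_G(F) F` in `Ḡ` maps onto `C_G(F) F / F` with
kernel centralised by the image of `C_G(F)`. A minimal normal subgroup `S` of `C_G(F) F / F` is the
image of a normal subgroup `X` of `Ȳ` inside the image of `C_G(F)`: if `S` is abelian, `X` is
nilpotent of class at most two; if `S` is perfect, a minimal such `X` is perfect, so it meets the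
kernel inside `Z(X) ≤ Φ(X) = 1` and is minimal normal in `Ȳ`. Either way `S` lies in the image of
`Soc(Ȳ) ≤ Soc(Ḡ)`.
-/

open Subgroup
open scoped commutatorElement

section Frattini

variable {G : Type*} [Group G]

lemma Subgroup.sup_inf_assoc_of_normal_of_le {N K : Subgroup G} [N.Normal] (M : Subgroup G)
    (hNK : N ≤ K) : (N ⊔ M) ⊓ K = N ⊔ M ⊓ K := by
  refine le_antisymm (fun x ⟨hx, hxK⟩ => ?_)
    (sup_le (le_inf le_sup_left hNK) (inf_le_inf_right K le_sup_right))
  obtain ⟨n, hn, m, hm, rfl⟩ := mem_sup_of_normal_left.1 hx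
  have hmK : m ∈ K := by simpa using K.mul_mem (K.inv_mem (hNK hn)) hxK
  exact mul_mem_sup hn ⟨hm, hmK⟩

lemma Subgroup.normal_inf_of_sup_eq_top {A L K : Subgroup G} [hK : K.Normal] (hAL : A ⊔ L = ⊤)
    (hA : A ≤ centralizer K) : (K ⊓ L).Normal := by
  rw [← normalizer_eq_top_iff, eq_top_iff, ← hAL]
  refine sup_le (hA.trans ((centralizer_le inf_le_left).trans (centralizer_le_normalizer _)))
    (le_trans ?_ inf_normalizer_le_normalizer_inf)
  exact le_inf (le_top.trans (normalizer_eq_top_iff.2 hK).ge) le_normalizer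

lemma le_frattini_iff {N : Subgroup G} : N ≤ frattini G ↔ ∀ M, IsCoatom M → N ≤ M := by
  simp [frattini, Order.radical]

lemma IsCoatom.sup_eq_top_of_not_le {M N : Subgroup G} (hM : IsCoatom M) (hNM : ¬ N ≤ M) :
    N ⊔ M = ⊤ :=
  (hM.le_iff.1 le_sup_right).resolve_right fun h => hNM (h ▸ le_sup_left)

lemma map_subtype_frattini_le_frattini [Finite G] (K : Subgroup G) [K.Normal] :
    (frattini K).map K.subtype ≤ frattini G := by
  refine le_frattini_iff.2 fun M hM => ?_
  by_contra hNM
  have hK : (frattini K).map K.subtype ⊔ M ⊓ K = K := by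
    rw [← sup_inf_assoc_of_normal_of_le M (map_subtype_le _), hM.sup_eq_top_of_not_le hNM,
      top_inf_eq]
  have hKM : M.subgroupOf K ⊔ frattini K = ⊤ := by
    apply map_injective K.subtype_injective
    rw [Subgroup.map_sup, subgroupOf_map_subtype, ← MonoidHom.range_eq_map, range_subtype,
      sup_comm, hK]
  exact hNM ((map_subtype_le _).trans (subgroupOf_eq_top.1 (frattini_nongenerating hKM)))

lemma frattini_eq_bot_of_normal [Finite G] (hΦ : frattini G = ⊥) (K : Subgroup G) [K.Normal] :
    frattini K = ⊥ :=
  (map_eq_bot_iff_of_injective _ K.subtype_injective).1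
    (le_bot_iff.1 (hΦ ▸ map_subtype_frattini_le_frattini K))

end Frattini

section Quotient

variable {G H : Type*} [Group G] [Group H]

lemma IsCoatom.map_of_ker_le {f : G →* H} (hf : Function.Surjective f) {M : Subgroup G}
    (hM : IsCoatom M) (hker : f.ker ≤ M) : IsCoatom (M.map f) := by
  refine ⟨fun htop => hM.1 ?_, fun K hK => ?_⟩
  · rw [← comap_map_eq_self hker, htop, comap_top]
  · have hK' := hM.2 (K.comap f)
      (by rwa [← comap_map_eq_self hker, comap_lt_comap_of_surjective hf])
    rw [← map_comap_eq_self_of_surjective hf K, hK', map_top_of_surjective f hf]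

lemma IsCoatom.isSimpleGroup_quotient {M : Subgroup G} [M.Normal] (hM : IsCoatom M) :
    IsSimpleGroup (G ⧸ M) where
  toNontrivial := QuotientGroup.nontrivial_iff.2 hM.1
  eq_bot_or_eq_top_of_normal N hN := by
    have hsurj := QuotientGroup.mk'_surjective M
    rw [← map_comap_eq_self_of_surjective hsurj N]
    rcases hM.le_iff.1 (QuotientGroup.ker_mk' M ▸ MonoidHom.ker_le_comap _ N) with h | h
    · exact Or.inr (by rw [h, map_top_of_surjective _ hsurj])
    · exact Or.inl (by rw [h, Subgroup.map_eq_bot_iff, QuotientGroup.ker_mk'])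

variable (G) in
lemma frattini_quotient_frattini_eq_bot : frattini (G ⧸ frattini G) = ⊥ := by
  have hsurj := QuotientGroup.mk'_surjective (frattini G)
  have hle : (frattini (G ⧸ frattini G)).comap (QuotientGroup.mk' _) ≤ frattini G := by
    refine le_frattini_iff.2 fun M hM => ?_
    have hker : (QuotientGroup.mk' (frattini G)).ker ≤ M := by
      rw [QuotientGroup.ker_mk']; exact frattini_le_coatom hM
    rw [← comap_map_eq_self hker]
    exact comap_mono (frattini_le_coatom (hM.map_of_ker_le hsurj hker))
  rw [eq_bot_iff, ← map_comap_eq_self_of_surjective hsurj (frattini _),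
    Subgroup.map_le_iff_le_comap]
  simpa [QuotientGroup.ker_mk'] using hle

end Quotient

section Commutator

variable {G : Type*} [Group G]

lemma commutatorElement_mul_left_of_mem_center {z : G} (hz : z ∈ center G) (x y : G) :
    ⁅z * x, y⁆ = ⁅x, y⁆ :=
  calc ⁅z * x, y⁆ = x * (z * y * z⁻¹) * x⁻¹ * y⁻¹ := by rw [← mem_center_iff.1 hz x]; group
    _ = ⁅x, y⁆ := by rw [← mem_center_iff.1 hz y, mul_inv_cancel_right, commutatorElement_def]

lemma commutator_le_frattini [Group.IsNilpotent G] : commutator G ≤ frattini G := by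
  refine le_frattini_iff.2 fun M hM => ?_
  have := Group.normalizerCondition_of_isNilpotent.normal_of_coatom M hM
  have := hM.isSimpleGroup_quotient
  have := Group.nilpotent_of_surjective _ (QuotientGroup.mk'_surjective M)
  exact Normal.quotient_commutative_iff_commutator_le.1 inferInstance

lemma center_le_frattini_of_commutator_eq_top (h : commutator G = ⊤) :
    center G ≤ frattini G := by
  refine le_frattini_iff.2 fun M hM => ?_
  by_contra hZM
  have hsup := hM.sup_eq_top_of_not_le hZM
  refine hM.1 (eq_top_iff.2 (h ▸ commutator_le.2 fun x _ y _ => ?_))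
  obtain ⟨z, hz, m, hm, rfl⟩ := mem_sup_of_normal_left.1 (hsup ▸ mem_top x : x ∈ center G ⊔ M)
  obtain ⟨w, hw, n, hn, rfl⟩ := mem_sup_of_normal_left.1 (hsup ▸ mem_top y : y ∈ center G ⊔ M)
  rw [commutatorElement_mul_left_of_mem_center hz, ← commutatorElement_inv,
    commutatorElement_mul_left_of_mem_center hw, commutatorElement_inv]
  exact commutator_le_self M (commutator_mem_commutator hm hn)

lemma Subgroup.inf_centralizer_eq_bot_of_commutator_eq_self [Finite G] (hΦ : frattini G = ⊥)
    (D : Subgroup G) [D.Normal] (hD : ⁅D, D⁆ = D) : D ⊓ centralizer D = ⊥ := by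
  have hperf : _root_.commutator D = ⊤ := by
    apply map_injective D.subtype_injective
    rw [map_subtype_commutator, ← MonoidHom.range_eq_map, range_subtype, hD]
  refine le_bot_iff.1 fun x ⟨hxD, hxC⟩ => ?_
  have hx : (⟨x, hxD⟩ : D) ∈ center D := mem_center_iff.2 fun y => Subtype.ext (hxC y y.2)
  exact hΦ ▸ map_subtype_frattini_le_frattini D
    (mem_map_of_mem _ (center_le_frattini_of_commutator_eq_top hperf hx))

lemma Subgroup.isNilpotent_of_commutator_le_centralizer {P : Subgroup G}
    (h : ⁅P, P⁆ ≤ centralizer P) : Group.IsNilpotent P := by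
  refine nilpotent_iff_lowerCentralSeries.2 ⟨2, map_injective P.subtype_injective ?_⟩
  rw [lowerCentralSeries_succ, top_lowerCentralSeries_one, map_commutator,
    map_subtype_commutator, ← MonoidHom.range_eq_map, range_subtype, Subgroup.map_bot]
  exact commutator_eq_bot_iff_le_centralizer.2 h

end Commutator

section MinimalNormal

variable {G G' : Type*} [Group G] [Group G'] {N : Subgroup G}

lemma IsMinimalNormal.le_socle (hN : IsMinimalNormal N) : N ≤ socle' G :=
  le_sSup hN

lemma exists_isMinimalNormal_le_s13 [Finite G] {V : Subgroup G} [V.Normal] (hV : V ≠ ⊥) :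
    ∃ W ≤ V, IsMinimalNormal W := by
  obtain ⟨W, ⟨hWV, hW, hWbot⟩, hmin⟩ := (Set.toFinite
    {W : Subgroup G | W ≤ V ∧ W.Normal ∧ W ≠ ⊥}).exists_minimal ⟨V, le_rfl, ‹_›, hV⟩
  refine ⟨W, hWV, hW, hWbot, fun K hK hKW => or_iff_not_imp_left.2 fun hKbot => ?_⟩
  exact le_antisymm hKW (hmin ⟨hKW.trans hWV, hK, hKbot⟩ hKW)

lemma IsMinimalNormal.commutator_eq_bot_or_eq (hN : IsMinimalNormal N) :
    ⁅N, N⁆ = ⊥ ∨ ⁅N, N⁆ = N :=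
  have := hN.1
  hN.2.2 _ inferInstance (commutator_le_self N)

lemma IsMinimalNormal.le_or_commutator_eq_bot (hN : IsMinimalNormal N) (K : Subgroup G)
    [K.Normal] : N ≤ K ∨ ⁅K, N⁆ = ⊥ := by
  have := hN.1
  rcases hN.2.2 (K ⊓ N) inferInstance inf_le_right with h | h
  · exact Or.inr (le_bot_iff.1 (h ▸ commutator_le_inf K N))
  · exact Or.inl (h ▸ inf_le_left)

lemma IsMinimalNormal.eq_or_commutator_eq_bot {M : Subgroup G} (hN : IsMinimalNormal N)
    (hM : IsMinimalNormal M) : N = M ∨ ⁅M, N⁆ = ⊥ :=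
  have := hM.1
  (hN.le_or_commutator_eq_bot M).imp_left fun h => (hM.2.2 N hN.1 h).resolve_left hN.2.1

lemma IsMinimalNormal.map_mulEquiv (hN : IsMinimalNormal N) (e : G ≃* G') :
    IsMinimalNormal (N.map e.toMonoidHom) := by
  have := hN.1
  have hsurj : Function.Surjective e.toMonoidHom := e.surjective
  refine ⟨this.map _ hsurj, (map_eq_bot_iff_of_injective _ e.injective).not.2 hN.2.1,
    fun K hK hKN => ?_⟩
  have hcomap : K.comap e.toMonoidHom ≤ N := by
    rwa [← map_le_map_iff_of_injective (f := e.toMonoidHom) e.injective,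
      map_comap_eq_self_of_surjective hsurj]
  rw [← map_comap_eq_self_of_surjective hsurj K]
  exact (hN.2.2 _ (hK.comap _) hcomap).imp (fun h => by rw [h, Subgroup.map_bot])
    (congrArg _)

lemma IsMinimalNormal.of_map {f : G →* G'} (hf : Function.Surjective f) [N.Normal]
    (hinj : N ⊓ f.ker = ⊥) (hN : IsMinimalNormal (N.map f)) : IsMinimalNormal N := by
  refine ⟨‹_›, fun h => hN.2.1 (by rw [h, Subgroup.map_bot]), fun K hK hKN => ?_⟩
  rcases hN.2.2 (K.map f) (hK.map f hf) (map_mono hKN) with h | h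
  · exact Or.inl (le_bot_iff.1 (hinj ▸ le_inf hKN ((Subgroup.map_eq_bot_iff K).1 h)))
  · refine Or.inr (le_antisymm hKN fun x hx => ?_)
    obtain ⟨k, hk, hkx⟩ := h ▸ mem_map_of_mem f hx
    have : k⁻¹ * x ∈ N ⊓ f.ker := ⟨N.mul_mem (N.inv_mem (hKN hk)) hx, by simp [hkx]⟩
    rw [hinj, mem_bot, inv_mul_eq_one] at this
    exact this ▸ hk

end MinimalNormal

section Socle

variable {G : Type*} [Group G] [Finite G]

lemma exists_isCompl_of_commutator_eq_bot {A : Subgroup G} [A.Normal] (hA : ⁅A, A⁆ = ⊥)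
    (hAΦ : A ⊓ frattini G = ⊥) : ∃ L, IsCompl A L := by
  obtain ⟨L, hL, hmin⟩ :=
    (Set.toFinite {L : Subgroup G | A ⊔ L = ⊤}).exists_minimal ⟨⊤, sup_top_eq A⟩
  refine ⟨L, .of_eq (le_bot_iff.1 (hAΦ ▸ le_inf inf_le_left (le_frattini_iff.2 fun M hM => ?_)))
    hL⟩
  have := normal_inf_of_sup_eq_top hL (commutator_eq_bot_iff_le_centralizer.1 hA)
  by_contra hNM
  have hAML : A ⊔ M ⊓ L = ⊤ :=
    calc A ⊔ M ⊓ L = A ⊔ (A ⊓ L ⊔ M ⊓ L) := by rw [← sup_assoc, sup_inf_self]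
      _ = ⊤ := by
        rw [← sup_inf_assoc_of_normal_of_le M inf_le_right, hM.sup_eq_top_of_not_le hNM,
          top_inf_eq, hL]
  exact hNM (inf_le_right.trans ((hmin hAML inf_le_right).trans inf_le_left))

lemma le_socle_of_commutator_eq_bot {K : Subgroup G} [K.Normal] (hK : ⁅K, K⁆ = ⊥)
    (hKΦ : K ⊓ frattini G = ⊥) : K ≤ socle' G := by
  set S := sSup {W : Subgroup G | IsMinimalNormal W ∧ W ≤ K}
  have hSK : S ≤ K := sSup_le fun W hW => hW.2
  have : S.Normal := sSup_normal _ fun W hW => hW.1.1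
  obtain ⟨L, hSL⟩ := exists_isCompl_of_commutator_eq_bot
    (le_bot_iff.1 (hK ▸ commutator_mono hSK hSK)) (le_bot_iff.1 (hKΦ ▸ inf_le_inf_right _ hSK))
  have := normal_inf_of_sup_eq_top hSL.sup_eq_top
    (hSK.trans (commutator_eq_bot_iff_le_centralizer.1 hK))
  have hKL : K ⊓ L = ⊥ := by
    by_contra hne
    obtain ⟨W, hWKL, hW⟩ := exists_isMinimalNormal_le_s13 hne
    have hWS : W ≤ S := le_sSup ⟨hW, hWKL.trans inf_le_left⟩
    exact hW.2.1 (le_bot_iff.1 (hSL.inf_eq_bot ▸ le_inf hWS (hWKL.trans inf_le_right)))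
  calc K = (S ⊔ L) ⊓ K := by rw [hSL.sup_eq_top, top_inf_eq]
    _ = S := by rw [sup_inf_assoc_of_normal_of_le L hSK, inf_comm, hKL, sup_bot_eq]
    _ ≤ socle' G := sSup_le_sSup fun W hW => hW.1

lemma le_socle_of_isNilpotent (hΦ : frattini G = ⊥) (K : Subgroup G) [K.Normal]
    [Group.IsNilpotent K] : K ≤ socle' G := by
  refine le_socle_of_commutator_eq_bot (le_bot_iff.1 ?_) (by rw [hΦ, inf_bot_eq])
  rw [← map_subtype_commutator, ← hΦ]
  exact (map_mono commutator_le_frattini).trans (map_subtype_frattini_le_frattini K)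

variable {Y : Subgroup G} [Y.Normal] {W : Subgroup Y}

lemma IsMinimalNormal.map_subtype_le_socle_of_commutator_eq_bot (hΦ : frattini G = ⊥)
    (hW : IsMinimalNormal W) (hWW : ⁅W, W⁆ = ⊥) : W.map Y.subtype ≤ socle' G := by
  set D := normalClosure (W.map Y.subtype : Set G)
  have hDW : D ≤ centralizer (W.map Y.subtype) := by
    refine (closure_le _).2 fun c hc => ?_
    obtain ⟨_, ⟨w, hw, rfl⟩, hwc⟩ := Group.mem_conjugatesOfSet_iff.1 hc
    obtain ⟨g, rfl⟩ := isConj_iff.1 hwc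
    rintro _ ⟨v, hv, rfl⟩
    have hcomm : ⁅W, W.map (MulAut.conjNormal g).toMonoidHom⁆ = ⊥ :=
      ((hW.map_mulEquiv _).eq_or_commutator_eq_bot hW).elim (fun h => by rwa [h]) id
    have := commutator_eq_bot_iff_le_centralizer.1 hcomm hv _ (mem_map_of_mem _ hw)
    simpa [MulAut.conjNormal_apply] using congrArg Subtype.val this.symm
  have hD : ⁅D, D⁆ = ⊥ :=
    commutator_eq_bot_iff_le_centralizer.2 (normalClosure_le_normal (le_centralizer_iff.1 hDW))
  exact le_normalClosure.trans (le_socle_of_commutator_eq_bot hD (by rw [hΦ, inf_bot_eq]))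

lemma IsMinimalNormal.map_subtype_le_socle_of_commutator_eq_self (hΦ : frattini G = ⊥)
    (hW : IsMinimalNormal W) (hWW : ⁅W, W⁆ = W) : W.map Y.subtype ≤ socle' G := by
  set D := normalClosure (W.map Y.subtype : Set G)
  have hD : ⁅D, D⁆ = D := by
    refine le_antisymm (commutator_le_self D) (normalClosure_le_normal ?_)
    rw [← hWW, map_commutator]
    exact commutator_mono le_normalClosure le_normalClosure
  have hWbot : W.map Y.subtype ≠ ⊥ :=
    (map_eq_bot_iff_of_injective _ Y.subtype_injective).not.2 hW.2.1
  obtain ⟨M, hMD, hM⟩ :=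
    exists_isMinimalNormal_le_s13 (V := D) fun h => hWbot (le_bot_iff.1 (h ▸ le_normalClosure))
  have := hM.1
  rcases hW.le_or_commutator_eq_bot (M.subgroupOf Y) with h | h
  · exact (map_mono h).trans ((subgroupOf_map_subtype M Y).le.trans (inf_le_left.trans hM.le_socle))
  · have hMY : M ⊓ Y = M := inf_eq_left.2 (hMD.trans (normalClosure_le_normal (map_subtype_le W)))
    replace h : ⁅W.map Y.subtype, M⁆ = ⊥ := by
      rw [commutator_comm, ← hMY, ← subgroupOf_map_subtype, ← map_commutator, h, Subgroup.map_bot]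
    have hMD' : M ≤ centralizer D :=
      le_centralizer_iff.1 (normalClosure_le_normal (commutator_eq_bot_iff_le_centralizer.1 h))
    exact absurd (le_bot_iff.1 (D.inf_centralizer_eq_bot_of_commutator_eq_self hΦ hD ▸
      le_inf hMD hMD')) hM.2.1

variable (Y) in
lemma map_subtype_socle_le_socle (hΦ : frattini G = ⊥) : (socle' Y).map Y.subtype ≤ socle' G := by
  rw [socle', (gc_map_comap Y.subtype).l_sSup]
  exact iSup₂_le fun W hW => hW.commutator_eq_bot_or_eq.elim
    (hW.map_subtype_le_socle_of_commutator_eq_bot hΦ)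
    (hW.map_subtype_le_socle_of_commutator_eq_self hΦ)

end Socle

theorem socle_le_map_socle {Y Q : Type*} [Group Y] [Finite Y] [Group Q] (hΦ : frattini Y = ⊥)
    {ψ : Y →* Q} (hψ : Function.Surjective ψ) (C : Subgroup Y) [C.Normal]
    (hCker : C ⊔ ψ.ker = ⊤) (hC : C ≤ centralizer ψ.ker) : socle' Q ≤ (socle' Y).map ψ := by
  refine sSup_le fun S hS => ?_
  have := hS.1
  have hP : (C ⊓ S.comap ψ).map ψ = S := by
    refine le_antisymm ((map_mono inf_le_right).trans (map_comap_le _ _)) fun s hs => ?_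
    obtain ⟨y, rfl⟩ := hψ s
    obtain ⟨c, hc, k, hk, rfl⟩ := mem_sup_of_normal_left.1 (hCker ▸ mem_top y : y ∈ C ⊔ ψ.ker)
    rw [map_mul, hk, mul_one] at hs ⊢
    exact mem_map_of_mem ψ ⟨hc, hs⟩
  rcases hS.commutator_eq_bot_or_eq with hab | hperf
  · have : Group.IsNilpotent ↥(C ⊓ S.comap ψ) := by
      refine isNilpotent_of_commutator_le_centralizer
        (le_trans ?_ (le_centralizer_iff.1 (inf_le_left.trans hC)))
      rw [← Subgroup.map_eq_bot_iff, map_commutator, hP, hab]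
    exact hP ▸ map_mono (le_socle_of_isNilpotent hΦ _)
  · obtain ⟨X, ⟨_, hXC, hXS⟩, hXmin⟩ := (Set.toFinite {X : Subgroup Y |
      X.Normal ∧ X ≤ C ∧ X.map ψ = S}).exists_minimal ⟨_, inferInstance, inf_le_left, hP⟩
    have hXX : ⁅X, X⁆ = X := le_antisymm (commutator_le_self X) (hXmin ⟨inferInstance,
      (commutator_le_self X).trans hXC, by rw [map_commutator, hXS, hperf]⟩ (commutator_le_self X))
    have hinj : X ⊓ ψ.ker = ⊥ := le_bot_iff.1 (X.inf_centralizer_eq_bot_of_commutator_eq_self hΦ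
      hXX ▸ inf_le_inf_left X (le_centralizer_iff.1 (hXC.trans hC)))
    exact hXS ▸ map_mono (IsMinimalNormal.of_map hψ hinj (hXS ▸ hS)).le_socle

section Fitting

variable (G : Type*) [Group G] [Finite G]

theorem map_subtype_socle_le_map_socle (N : Subgroup G) [N.Normal] (hN : frattini G ≤ N) :
    (socle' ((centralizer N ⊔ N).map (QuotientGroup.mk' N))).map (Subgroup.subtype _) ≤
      (socle' (G ⧸ frattini G)).map (QuotientGroup.map _ _ (MonoidHom.id G) hN) := by
  set π := QuotientGroup.mk' (frattini G)
  set ρ := QuotientGroup.map _ _ (MonoidHom.id G) hN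
  set Y := (centralizer N ⊔ N).map π
  have hρY : ∀ y : Y, ρ y ∈ (centralizer N ⊔ N).map (QuotientGroup.mk' N) := by
    rintro ⟨_, x, hx, rfl⟩; exact mem_map_of_mem _ hx
  set ψ := (ρ.comp Y.subtype).codRestrict _ hρY
  have hψ : Function.Surjective ψ := by
    rintro ⟨_, x, hx, rfl⟩; exact ⟨⟨π x, mem_map_of_mem _ hx⟩, rfl⟩
  set C := ((centralizer N).map π).subgroupOf Y
  have hCker : C ⊔ ψ.ker = ⊤ := by
    refine eq_top_iff.2 fun y _ => ?_
    obtain ⟨_, x, hx, rfl⟩ := y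
    obtain ⟨c, hc, n, hn, rfl⟩ := mem_sup_of_normal_right.1 hx
    have hmul : (⟨π (c * n), mem_map_of_mem π hx⟩ : Y) =
        ⟨π c, mem_map_of_mem π (mem_sup_left hc)⟩ * ⟨π n, mem_map_of_mem π (mem_sup_right hn)⟩ :=
      Subtype.ext (map_mul π c n)
    rw [hmul]
    exact mul_mem_sup (mem_subgroupOf.2 (mem_map_of_mem π hc))
      (Subtype.ext ((QuotientGroup.eq_one_iff n).2 hn))
  have hC : C ≤ centralizer ψ.ker := by
    rintro ⟨_, _⟩ ⟨c, hc, rfl⟩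
    refine mem_centralizer_iff.2 fun k hk => Subtype.ext ?_
    obtain ⟨_, x, hx, rfl⟩ := k
    have hxN : x ∈ N := (QuotientGroup.eq_one_iff x).1 (congrArg Subtype.val hk)
    simp only [coe_mul, ← map_mul, mem_centralizer_iff.1 hc x hxN]
  have hΦ := frattini_quotient_frattini_eq_bot G
  calc _ ≤ ((socle' Y).map ψ).map (Subgroup.subtype _) :=
        map_mono (socle_le_map_socle (frattini_eq_bot_of_normal hΦ Y) hψ C hCker hC)
    _ = ((socle' Y).map Y.subtype).map ρ := by rw [map_map, map_map]; rfl
    _ ≤ _ := map_mono (map_subtype_socle_le_socle Y hΦ)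

lemma frattini_le_fitting : frattini G ≤ Fitting G :=
  le_sSup ⟨inferInstance, frattini_nilpotent⟩

lemma map_fitting_le_socle :
    (Fitting G).map (QuotientGroup.mk' (frattini G)) ≤ socle' (G ⧸ frattini G) := by
  rw [Fitting, (gc_map_comap _).l_sSup]
  refine iSup₂_le fun N ⟨hN, _⟩ => ?_
  have := hN.map _ (QuotientGroup.mk'_surjective (frattini G))
  have := Group.nilpotent_of_surjective _
    ((QuotientGroup.mk' (frattini G)).subgroupMap_surjective N)
  exact le_socle_of_isNilpotent (frattini_quotient_frattini_eq_bot G) _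

end Fitting

theorem fstar_le_ftilde (G : Type*) [Group G] [Finite G] :
    FStar G ≤ Ftilde G := by
  set ρ := QuotientGroup.map (frattini G) (Fitting G) (MonoidHom.id G) (frattini_le_fitting G)
  have hρ : QuotientGroup.mk' (Fitting G) = ρ.comp (QuotientGroup.mk' (frattini G)) := rfl
  have hker : ρ.ker = (Fitting G).map (QuotientGroup.mk' (frattini G)) :=
    QuotientGroup.ker_map ..
  calc FStar G ≤ ((socle' _).map ρ).comap (QuotientGroup.mk' (Fitting G)) :=
        comap_mono (map_subtype_socle_le_map_socle G _ (frattini_le_fitting G))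
    _ = (socle' _ ⊔ ρ.ker).comap (QuotientGroup.mk' (frattini G)) := by
        rw [hρ, ← comap_comap, comap_map_eq]
    _ = Ftilde G := by rw [hker, sup_of_le_left (map_fitting_le_socle G)]; rfl
end

section
/- Let G be a finite group, R a subgroup of G, and H a subgroup of G such that H is R-conjugate-permutable and R·H = H·R (as subsets of G). Then H is a subnormal subgroup of the subgroup H·R. -/
open scoped Pointwise

/-!
Every element of `H ⊔ R = H * R` has the form `h * r`, and `H^(h r) = H^r`, so `H` permutes with
all of its conjugates in `K = H ⊔ R`. For any such `K`-conjugate-permutable `U`, the conjugates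
`U^a`, `U^b` (`a, b ∈ K`) pairwise permute, hence `U ⊔ U^k = U * U^k` is again
`K`-conjugate-permutable. A maximal proper such subgroup above `H` is normal in `K`: if
`U * U^k = K` then `k ∈ U * U^k` forces `k ∈ U`. Induction on `K` finishes the proof.
-/

section ConjPermutable

variable {G : Type*} [Group G]

lemma mem_conjS {x a : G} {H : Subgroup G} : a ∈ conjS x H ↔ x * a * x⁻¹ ∈ H := by
  simp only [conjS, Subgroup.mem_map, MulEquiv.coe_toMonoidHom, MulAut.conj_apply]
  constructor
  · rintro ⟨h, hh, rfl⟩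
    simpa [mul_assoc] using hh
  · intro h
    exact ⟨x * a * x⁻¹, h, by group⟩

lemma conjS_conjS (x y : G) (H : Subgroup G) : conjS y (conjS x H) = conjS (x * y) H := by
  ext a
  simp only [mem_conjS, mul_inv_rev, mul_assoc]

lemma conjS_of_mem_s14 {x : G} {H : Subgroup G} (hx : x ∈ H) : conjS x H = H := by
  ext a
  rw [mem_conjS]
  refine ⟨fun h => ?_, fun h => H.mul_mem (H.mul_mem hx h) (H.inv_mem hx)⟩
  simpa [mul_assoc] using H.mul_mem (H.mul_mem (H.inv_mem hx) h) hx

lemma conjS_le {x : G} {H K : Subgroup G} (hH : H ≤ K) (hx : x ∈ K) : conjS x H ≤ K := by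
  intro a ha
  rw [mem_conjS] at ha
  simpa [mul_assoc] using K.mul_mem (K.mul_mem (K.inv_mem hx) (hH ha)) hx

lemma conjS_sup (x : G) (A B : Subgroup G) : conjS x (A ⊔ B) = conjS x A ⊔ conjS x B :=
  Subgroup.map_sup A B _

lemma Commute.conjS {A B : Subgroup G} (h : Commute (A : Set G) B) (x : G) :
    Commute (conjS x A : Set G) (conjS x B) := by
  simp only [Commute, SemiconjBy, _root_.conjS, Subgroup.coe_map, ← Set.image_mul, h.eq]

lemma coe_sup_of_commute {A B : Subgroup G} (h : Commute (A : Set G) B) :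
    ((A ⊔ B : Subgroup G) : Set G) = A * B := by
  have hmul : (A * B : Set G) * (A * B) = A * B := by
    rw [mul_assoc, ← mul_assoc (B : Set G), ← h.eq, mul_assoc, ← mul_assoc, coe_mul_coe,
      coe_mul_coe]
  let S : Subgroup G :=
    { carrier := A * B
      mul_mem' := fun ha hb => hmul ▸ Set.mul_mem_mul ha hb
      one_mem' := ⟨1, A.one_mem, 1, B.one_mem, one_mul 1⟩
      inv_mem' := fun {a} ha => by
        have ha' : a⁻¹ ∈ ((A : Set G) * B)⁻¹ := Set.inv_mem_inv.2 ha
        rwa [mul_inv_rev, inv_coe_set, inv_coe_set, ← h.eq] at ha' }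
  have hS : A ⊔ B ≤ S := sup_le (fun a ha => ⟨a, ha, 1, B.one_mem, mul_one a⟩)
    (fun b hb => ⟨1, A.one_mem, b, hb, one_mul b⟩)
  refine Set.Subset.antisymm hS ?_
  rintro _ ⟨a, ha, b, hb, rfl⟩
  exact Subgroup.mul_mem _ (Subgroup.mem_sup_left ha) (Subgroup.mem_sup_right hb)

lemma mem_of_mem_mul_conjS {U : Subgroup G} {k : G} (hk : k ∈ (U : Set G) * conjS k U) :
    k ∈ U := by
  obtain ⟨a, ha, b, hb, rfl⟩ := hk
  rw [SetLike.mem_coe, mem_conjS] at hb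
  simpa [mul_assoc] using U.mul_mem hb ha

lemma isNormalIn_of_conjS_le {U K : Subgroup G} (hUK : U ≤ K) (h : ∀ k ∈ K, conjS k U ≤ U) :
    IsNormalIn U K := by
  refine ⟨hUK, fun x hx u hu => h x⁻¹ (K.inv_mem hx) ?_⟩
  rw [mem_conjS]
  simpa [mul_assoc] using hu

variable {R S : Set G} {K U : Subgroup G}

lemma IsRCP.mono (hU : IsRCP R U) (hSR : S ⊆ R) : IsRCP S U :=
  fun x hx => hU x (hSR hx)

lemma IsRCP.commute {x : G} (hU : IsRCP R U) (hx : x ∈ R) :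
    Commute (U : Set G) (conjS x U) :=
  hU x hx

lemma IsRCP.commute_conjS (hU : IsRCP (K : Set G) U) {a b : G} (ha : a ∈ K) (hb : b ∈ K) :
    Commute (conjS a U : Set G) (conjS b U) := by
  have h := Commute.conjS (hU.commute (K.mul_mem hb (K.inv_mem ha))) a
  rwa [conjS_conjS, inv_mul_cancel_right] at h

lemma IsRCP.sup_conjS (hU : IsRCP (K : Set G) U) {k : G} (hk : k ∈ K) :
    IsRCP (K : Set G) (U ⊔ conjS k U) := by
  intro x hx
  have hkx : k * x ∈ K := K.mul_mem hk hx
  rw [conjS_sup, conjS_conjS, coe_sup_of_commute (hU.commute hk),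
    coe_sup_of_commute (hU.commute_conjS hx hkx)]
  exact ((hU.commute hx).mul_right (hU.commute hkx)).mul_left
    ((hU.commute_conjS hk hx).mul_right (hU.commute_conjS hk hkx))

lemma IsRCP.exists_isNormalIn [Finite G] (hU : IsRCP (K : Set G) U) (hUK : U < K) :
    ∃ N, U ≤ N ∧ N < K ∧ IsNormalIn N K := by
  induction U using WellFoundedGT.induction with
  | _ U ih =>
    by_cases hnorm : ∀ k ∈ K, conjS k U ≤ U
    · exact ⟨U, le_rfl, hUK, isNormalIn_of_conjS_le hUK.le hnorm⟩
    push Not at hnorm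
    obtain ⟨k, hk, hkU⟩ := hnorm
    have hUW : U < U ⊔ conjS k U := left_lt_sup.2 hkU
    have hWK : U ⊔ conjS k U < K := by
      refine lt_of_le_of_ne (sup_le hUK.le (conjS_le hUK.le hk)) fun hWK => hkU ?_
      have hk' : k ∈ (U : Set G) * conjS k U := by
        rw [← coe_sup_of_commute (hU.commute hk), hWK]
        exact hk
      rw [conjS_of_mem_s14 (mem_of_mem_mul_conjS hk')]
    obtain ⟨N, hWN, hNK, hN⟩ := ih _ hUW (hU.sup_conjS hk) hWK
    exact ⟨N, hUW.le.trans hWN, hNK, hN⟩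

end ConjPermutable

section Subnormal

variable {G : Type*} [Group G] {H U K : Subgroup G}

lemma isSubnormalIn_refl (H : Subgroup G) : IsSubnormalIn H H :=
  ⟨0, fun _ => H, rfl, rfl, fun i => i.elim0⟩

lemma IsSubnormalIn.trans_isNormalIn (h : IsSubnormalIn H U) (hUK : IsNormalIn U K) :
    IsSubnormalIn H K := by
  obtain ⟨n, s, h0, hlast, hstep⟩ := h
  refine ⟨n + 1, Fin.snoc s K, ?_, Fin.snoc_last _ _, Fin.lastCases ?_ fun j => ?_⟩
  · rw [← Fin.castSucc_zero, Fin.snoc_castSucc, h0]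
  · rw [Fin.succ_last, Fin.snoc_last, Fin.snoc_castSucc, hlast]
    exact hUK
  · rw [Fin.succ_castSucc, Fin.snoc_castSucc, Fin.snoc_castSucc]
    exact hstep j

lemma IsRCP.isSubnormalIn [Finite G] (hH : IsRCP (K : Set G) H) (hHK : H ≤ K) :
    IsSubnormalIn H K := by
  induction K using WellFoundedLT.induction with
  | _ K ih =>
    rcases hHK.eq_or_lt with rfl | hHK
    · exact isSubnormalIn_refl H
    obtain ⟨N, hHN, hNK, hN⟩ := hH.exists_isNormalIn hHK
    exact (ih N hNK (hH.mono hNK.le) hHN).trans_isNormalIn hN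

end Subnormal

theorem subnormal_of_rcp_of_permutes
    {G : Type*} [Group G] [Finite G] (R H : Subgroup G)
    (h1 : IsRCP (R : Set G) H)
    (h2 : (R : Set G) * (H : Set G) = (H : Set G) * (R : Set G)) :
    IsSubnormalIn H (H ⊔ R) := by
  refine IsRCP.isSubnormalIn (fun x hx => ?_) le_sup_left
  rw [coe_sup_of_commute h2.symm] at hx
  obtain ⟨h, hh, r, hr, rfl⟩ := hx
  rw [← conjS_conjS, conjS_of_mem_s14 hh]
  exact h1 r hr
end
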